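/- Let (P1, P2) ∈ Π(x1, y1) × Π(x2, y2) be a pair of shortest paths admitting a twin-crossing pair (a, b), and let (Q1, Q2) = φ_{a,b}(P1, P2). Then (Q1, Q2) ∈ Π(x1, y1) × Π(x2, y2), the pair (a, b) is a twin-crossing pair for (Q1, Q2), φ_{a,b}(Q1, Q2) = (P1, P2), and (Q1, Q2) ≠ (P1, P2). -/

import Mathlib

open scoped BigOperators

namespace DSP

variable {V : Type*} [Fintype V] [DecidableEq V]

/-- A path: a nonempty list of distinct vertices in which each consecutive
pair is joined by a directed edge. -/
def IsPath (E : V → V → Prop) (p : List V) : Prop :=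
  p ≠ [] ∧ p.Nodup ∧ p.Chain' E

/-- A path from `x` to `y`. -/
def IsPathFrom (E : V → V → Prop) (p : List V) (x y : V) : Prop :=
  IsPath E p ∧ p.head? = some x ∧ p.getLast? = some y

/-- The (ordered) list of edges of a path. -/
def pathEdges (p : List V) : List (V × V) := p.zip p.tail

/-- The weight of a path: the sum of its edge weights. -/
def pathWeight (ℓ : V → V → ℝ) (p : List V) : ℝ :=
  ((pathEdges p).map fun e => ℓ e.1 e.2).sum

/-- `dist x y` : the minimum weight of a path from `x` to `y`
(`⊤` if there is no such path). -/
noncomputable def dist (E : V → V → Prop) (ℓ : V → V → ℝ) (x y : V) : EReal :=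
  sInf {w : EReal | ∃ p : List V, IsPathFrom E p x y ∧ (pathWeight ℓ p : EReal) = w}

/-- A shortest path from `x` to `y` : a path from `x` to `y` whose weight
equals `dist x y`.  `Π(x, y)` is the set of all such paths. -/
def IsShortestPath (E : V → V → Prop) (ℓ : V → V → ℝ) (p : List V) (x y : V) : Prop :=
  IsPathFrom E p x y ∧ (pathWeight ℓ p : EReal) = dist E ℓ x y

/-- A directed cycle: a closed walk with at least one edge whose internal
vertices are pairwise distinct. -/
def IsCycle (E : V → V → Prop) (p : List V) : Prop :=
  2 ≤ p.length ∧ p.Chain' E ∧ p.head? = p.getLast? ∧ p.tail.Nodup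

/-- `G` contains no directed cycle of negative or zero total weight. -/
def NoNonposCycle (E : V → V → Prop) (ℓ : V → V → ℝ) : Prop :=
  ∀ p : List V, IsCycle E p → 0 < pathWeight ℓ p

/-- `G` is a DAG: it contains no directed cycle. -/
def Acyclic (E : V → V → Prop) : Prop :=
  ∀ p : List V, ¬ IsCycle E p

/-- `x` precedes `y` on the path `p` (`x = y` allowed). -/
def Precedes (p : List V) (x y : V) : Prop :=
  x ∈ p ∧ y ∈ p ∧ p.idxOf x ≤ p.idxOf y

/-- `subpath p x y` : the subpath `p[x, y]` of `p` from `x` to `y`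
(for `x` preceding `y` on `p`). -/
def subpath (p : List V) (x y : V) : List V :=
  (p.take (p.idxOf y + 1)).drop (p.idxOf x)

/-- Concatenation `p · q` of two paths (the last vertex of `p` coinciding
with the first vertex of `q`). -/
def pathConcat (p q : List V) : List V := p ++ q.tail

/-- A vertex is internal to a path if it lies on it and is not an endpoint. -/
def Internal (p : List V) (v : V) : Prop :=
  v ∈ p ∧ p.head? ≠ some v ∧ p.getLast? ≠ some v

/-- Paths `p1` from `x1` to `y1` and `p2` from `x2` to `y2` are internally
vertex-disjoint: they share no vertices except possibly those in
`{x1, y1} ∩ {x2, y2}`. -/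
def InternallyDisjoint (p1 : List V) (x1 y1 : V) (p2 : List V) (x2 y2 : V) : Prop :=
  ∀ u, u ∈ p1 → u ∈ p2 → u ∈ ({x1, y1} ∩ {x2, y2} : Set V)

/-- `(a, b)` is a twin-crossing pair for paths `p1`, `p2`. -/
def TwinCrossingPair (p1 p2 : List V) (a b : V) : Prop :=
  a ≠ b ∧ Precedes p1 a b ∧ Precedes p2 a b ∧ subpath p1 a b ≠ subpath p2 a b

/-- The swap operation `φ_{a,b}(P1, P2)`. -/
def swap (p1 : List V) (x1 y1 : V) (p2 : List V) (x2 y2 : V) (a b : V) :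
    List V × List V :=
  (pathConcat (pathConcat (subpath p1 x1 a) (subpath p2 a b)) (subpath p1 b y1),
   pathConcat (pathConcat (subpath p2 x2 a) (subpath p1 a b)) (subpath p2 b y2))

/-- The graph with vertex `u` deleted. -/
def deleteVertex (E : V → V → Prop) (u : V) : V → V → Prop :=
  fun a b => E a b ∧ a ≠ u ∧ b ≠ u

/-- `u` is distance-critical for `(x, y)` : deleting `u` strictly increases
the distance from `x` to `y`. -/
def DistCritical (E : V → V → Prop) (ℓ : V → V → ℝ) (x y u : V) : Prop :=
  dist E ℓ x y < dist (deleteVertex E u) ℓ x y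

/-- `Δ(x, y)` : the distance-critical vertices for `(x, y)` together with the
endpoints `x`, `y`. -/
def Delta (E : V → V → Prop) (ℓ : V → V → ℝ) (x y : V) : Set V :=
  {u | DistCritical E ℓ x y u} ∪ {x, y}

/-- `δ(x, y) = |Δ(x, y)|`. -/
noncomputable def deltaCard (E : V → V → Prop) (ℓ : V → V → ℝ) (x y : V) : ℕ :=
  (Delta E ℓ x y).ncard

/-- `(a, b)` is a concordant pair for paths `p1` (from `x1` to `y1`) and
`p2` (from `x2` to `y2`). -/
def ConcordantPair (p1 : List V) (x1 y1 : V) (p2 : List V) (x2 y2 : V) (a b : V) : Prop :=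
  a ∉ ({x1, y1} ∩ {x2, y2} : Set V) ∧ b ∉ ({x1, y1} ∩ {x2, y2} : Set V) ∧
  Precedes p1 a b ∧ Precedes p2 a b ∧
  InternallyDisjoint (subpath p1 x1 a) x1 a (subpath p2 x2 a) x2 a ∧
  InternallyDisjoint (subpath p1 b y1) b y1 (subpath p2 b y2) b y2

/-- `𝒞(P1, P2)` : the set of concordant pairs for `(P1, P2)`. -/
def concordantSet (p1 : List V) (x1 y1 : V) (p2 : List V) (x2 y2 : V) : Set (V × V) :=
  {c | ConcordantPair p1 x1 y1 p2 x2 y2 c.1 c.2}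

/-- The interaction complexity `γ(P1, P2) = Σ_{(v,w) ∈ 𝒞(P1,P2)} δ(v, w)`. -/
noncomputable def gamma (E : V → V → Prop) (ℓ : V → V → ℝ)
    (p1 : List V) (x1 y1 : V) (p2 : List V) (x2 y2 : V) : ℕ :=
  ∑ᶠ c ∈ concordantSet p1 x1 y1 p2 x2 y2, deltaCard E ℓ c.1 c.2

/-- `E(x, y)` : the set of edges lying on at least one shortest path
from `x` to `y`. -/
def shortestEdges (E : V → V → Prop) (ℓ : V → V → ℝ) (x y : V) : Set (V × V) :=
  {e | ∃ p : List V, IsShortestPath E ℓ p x y ∧ e ∈ pathEdges p}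

section Poly

variable (F : Type*) [Field F] [CharP F 2]

/-- The monomial `f(P) = ∏_{e ∈ E(P)} z_e` of a path. -/
noncomputable def pathMon (p : List V) : MvPolynomial (V × V) F :=
  ((pathEdges p).map fun e => MvPolynomial.X e).prod

/-- The enumerating polynomial of a collection of paths. -/
noncomputable def enumPoly (S : Set (List V)) : MvPolynomial (V × V) F :=
  ∑ᶠ p ∈ S, pathMon F p

/-- The enumerating polynomial of a collection of pairs of paths. -/
noncomputable def enumPoly2 (S : Set (List V × List V)) : MvPolynomial (V × V) F :=
  ∑ᶠ q ∈ S, pathMon F q.1 * pathMon F q.2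

variable (E : V → V → Prop) (ℓ : V → V → ℝ)

/-- `F(x, y)` : the enumerating polynomial of `Π(x, y)`. -/
noncomputable def Fpoly (x y : V) : MvPolynomial (V × V) F :=
  enumPoly F {p : List V | IsShortestPath E ℓ p x y}

end Poly

variable (E : V → V → Prop) (ℓ : V → V → ℝ)

/-- The collection of internally vertex-disjoint pairs
`(P1, P2) ∈ Π(x1, y1) × Π(x2, y2)`. -/
def disjPairs (x1 y1 x2 y2 : V) : Set (List V × List V) :=
  {q | IsShortestPath E ℓ q.1 x1 y1 ∧ IsShortestPath E ℓ q.2 x2 y2 ∧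
       InternallyDisjoint q.1 x1 y1 q.2 x2 y2}

/-- Pairs `(P1, P2) ∈ Π(x1, y1) × Π(x2, y2)` such that `v ∈ V(P1) ∩ V(P2)`
and the prefix `P1[x1, v]` and the suffix `P2[v, y2]` are internally
vertex-disjoint (defining `H_v`). -/
def HvPairs (v x1 y1 x2 y2 : V) : Set (List V × List V) :=
  {q | IsShortestPath E ℓ q.1 x1 y1 ∧ IsShortestPath E ℓ q.2 x2 y2 ∧
       v ∈ q.1 ∧ v ∈ q.2 ∧
       InternallyDisjoint (subpath q.1 x1 v) x1 v (subpath q.2 v y2) v y2}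

/-- Pairs `(P1, P2) ∈ Π(x1, y1) × Π(x2, y2)` such that
`(a, v) ∈ E(P1) ∩ E(P2)` and the prefix `P1[x1, a]` and the suffix
`P2[v, y2]` are internally vertex-disjoint (defining `H_{av}`). -/
def HavPairs (a v x1 y1 x2 y2 : V) : Set (List V × List V) :=
  {q | IsShortestPath E ℓ q.1 x1 y1 ∧ IsShortestPath E ℓ q.2 x2 y2 ∧
       (a, v) ∈ pathEdges q.1 ∧ (a, v) ∈ pathEdges q.2 ∧
       InternallyDisjoint (subpath q.1 x1 a) x1 a (subpath q.2 v y2) v y2}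

/-- Pairs `(P1, P2) ∈ Π(x1, y1) × Π(x2, y2)` such that `v ∈ V(P1) ∩ V(P2)`
and the prefix `P1[x1, v]` is internally vertex-disjoint from both
`P2[x2, v]` and `P2[v, y2]` (defining `D_v`). -/
def DvPairs (v x1 y1 x2 y2 : V) : Set (List V × List V) :=
  {q | IsShortestPath E ℓ q.1 x1 y1 ∧ IsShortestPath E ℓ q.2 x2 y2 ∧
       v ∈ q.1 ∧ v ∈ q.2 ∧
       InternallyDisjoint (subpath q.1 x1 v) x1 v (subpath q.2 x2 v) x2 v ∧
       InternallyDisjoint (subpath q.1 x1 v) x1 v (subpath q.2 v y2) v y2}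

/-- Pairs `(P1, P2) ∈ Π(x1, y1) × Π(x2, y2)` with interaction complexity
`γ(P1, P2) ≤ k` (defining `F_{disj,k}`). -/
def disjkPairs (k : ℤ) (x1 y1 x2 y2 : V) : Set (List V × List V) :=
  {q | IsShortestPath E ℓ q.1 x1 y1 ∧ IsShortestPath E ℓ q.2 x2 y2 ∧
       (gamma E ℓ q.1 x1 y1 q.2 x2 y2 : ℤ) ≤ k}

/-- Pairs `(P1, P2) ∈ Π(x1, y1) × Π(x2, y2)` with `γ(P1, P2) ≤ k` such that
`(v, w) ∈ 𝒞(P1, P2)` and `(v, w)` is the concordant pair appearing first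
along `P1` (defining `D_{v,w,k}`). -/
def DvwkPairs (k : ℤ) (v w x1 y1 x2 y2 : V) : Set (List V × List V) :=
  {q | IsShortestPath E ℓ q.1 x1 y1 ∧ IsShortestPath E ℓ q.2 x2 y2 ∧
       (gamma E ℓ q.1 x1 y1 q.2 x2 y2 : ℤ) ≤ k ∧
       (v, w) ∈ concordantSet q.1 x1 y1 q.2 x2 y2 ∧
       ∀ c ∈ concordantSet q.1 x1 y1 q.2 x2 y2, q.1.idxOf v ≤ q.1.idxOf c.1}

/-- Pairs `(P1, P2) ∈ Π(x1, y1) × Π(x2, y2)` such that `v` and `w` lie on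
both paths with `v` preceding `w` on both, the subpaths `P1[x1, v]` and
`P2[w, y2]` are internally vertex-disjoint, and
`γ(P1[v, y1], P2[x2, w]) ≤ k` (defining `H_{v,w,k}`). -/
def HvwkPairs (k : ℤ) (v w x1 y1 x2 y2 : V) : Set (List V × List V) :=
  {q | IsShortestPath E ℓ q.1 x1 y1 ∧ IsShortestPath E ℓ q.2 x2 y2 ∧
       Precedes q.1 v w ∧ Precedes q.2 v w ∧
       InternallyDisjoint (subpath q.1 x1 v) x1 v (subpath q.2 w y2) w y2 ∧
       (gamma E ℓ (subpath q.1 v y1) v y1 (subpath q.2 x2 w) x2 w : ℤ) ≤ k}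

/-- As `HvwkPairs`, additionally requiring the edge `(a, v)` on both paths
(disjointness imposed on `P1[x1, a]` and `P2[w, y2]`), defining `H_{av,w,k}`. -/
def HavwkPairs (k : ℤ) (a v w x1 y1 x2 y2 : V) : Set (List V × List V) :=
  {q | IsShortestPath E ℓ q.1 x1 y1 ∧ IsShortestPath E ℓ q.2 x2 y2 ∧
       Precedes q.1 v w ∧ Precedes q.2 v w ∧
       (a, v) ∈ pathEdges q.1 ∧ (a, v) ∈ pathEdges q.2 ∧
       InternallyDisjoint (subpath q.1 x1 a) x1 a (subpath q.2 w y2) w y2 ∧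
       (gamma E ℓ (subpath q.1 v y1) v y1 (subpath q.2 x2 w) x2 w : ℤ) ≤ k}

/-- As `HvwkPairs`, additionally requiring the edge `(w, b)` on both paths
(disjointness imposed on `P1[x1, v]` and `P2[b, y2]`), defining `H_{v,wb,k}`. -/
def HvwbkPairs (k : ℤ) (v w b x1 y1 x2 y2 : V) : Set (List V × List V) :=
  {q | IsShortestPath E ℓ q.1 x1 y1 ∧ IsShortestPath E ℓ q.2 x2 y2 ∧
       Precedes q.1 v w ∧ Precedes q.2 v w ∧
       (w, b) ∈ pathEdges q.1 ∧ (w, b) ∈ pathEdges q.2 ∧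
       InternallyDisjoint (subpath q.1 x1 v) x1 v (subpath q.2 b y2) b y2 ∧
       (gamma E ℓ (subpath q.1 v y1) v y1 (subpath q.2 x2 w) x2 w : ℤ) ≤ k}

/-- As `HvwkPairs`, additionally requiring both edges `(a, v)` and `(w, b)`
on both paths (disjointness imposed on `P1[x1, a]` and `P2[b, y2]`),
defining `H_{av,wb,k}`. -/
def HavwbkPairs (k : ℤ) (a v w b x1 y1 x2 y2 : V) : Set (List V × List V) :=
  {q | IsShortestPath E ℓ q.1 x1 y1 ∧ IsShortestPath E ℓ q.2 x2 y2 ∧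
       Precedes q.1 v w ∧ Precedes q.2 v w ∧
       (a, v) ∈ pathEdges q.1 ∧ (a, v) ∈ pathEdges q.2 ∧
       (w, b) ∈ pathEdges q.1 ∧ (w, b) ∈ pathEdges q.2 ∧
       InternallyDisjoint (subpath q.1 x1 a) x1 a (subpath q.2 b y2) b y2 ∧
       (gamma E ℓ (subpath q.1 v y1) v y1 (subpath q.2 x2 w) x2 w : ℤ) ≤ k}

/-!
Write `P₁ = L₁ a M₁ b N₁` and `P₂ = L₂ a M₂ b N₂`; the swap exchanges the middle segments, giving
`Q₁ = L₁ a M₂ b N₁` and `Q₂ = L₂ a M₁ b N₂`. These are walks with the endpoints of `P₁`, `P₂`, and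
`w(Q₁) + w(Q₂) = w(P₁) + w(P₂)`. Since all cycles have positive weight, every walk weighs at least
the distance between its endpoints, and strictly more if it repeats a vertex (cut out a cycle).
Hence `w(Pᵢ) ≤ w(Qᵢ)`, the equal sums force equality, and each `Qᵢ` is a shortest path. Swapping
again restores the middle segments, and `Q₁ ≠ P₁` because `M₁ ≠ M₂`.
-/

section Walks

variable {α : Type*} {E : α → α → Prop} {ℓ : α → α → ℝ}

theorem exists_eq_append_cons_append_cons_of_not_nodup :
    ∀ {l : List α}, ¬ l.Nodup → ∃ L c M N, l = L ++ c :: (M ++ c :: N) ∧ (c :: M).Nodup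
  | [], h => (h List.nodup_nil).elim
  | d :: t, h => by
    by_cases ht : t.Nodup
    · -- the first repetition in `d :: t` is a second copy of `d`
      obtain ⟨M, N, rfl⟩ := List.append_of_mem (by simpa [ht] using h : d ∈ t)
      obtain ⟨hM, -, hdisj⟩ := List.nodup_append.1 ht
      exact ⟨[], d, M, N, rfl, List.nodup_cons.2 ⟨fun hd => hdisj d hd d (by simp) rfl, hM⟩⟩
    · obtain ⟨L, c, M, N, rfl, hM⟩ := exists_eq_append_cons_append_cons_of_not_nodup ht
      exact ⟨d :: L, c, M, N, rfl, hM⟩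

theorem isChain_append_cons_append_cons_iff {L M N : List α} {a b : α} :
    (L ++ a :: (M ++ b :: N)).IsChain E ↔
      (L ++ [a]).IsChain E ∧ (a :: (M ++ [b])).IsChain E ∧ (b :: N).IsChain E := by
  rw [List.isChain_split, List.isChain_cons_split]

theorem getLast?_append_cons_append_cons (L M N : List α) (a b : α) :
    (L ++ a :: (M ++ b :: N)).getLast? = (b :: N).getLast? := by
  rw [List.getLast?_append_cons, ← List.cons_append, List.getLast?_append_cons]

theorem pathEdges_append_cons (L : List α) (a : α) (N : List α) :
    pathEdges (L ++ a :: N) = pathEdges (L ++ [a]) ++ pathEdges (a :: N) := by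
  induction L with
  | nil => simp [pathEdges]
  | cons d L ih =>
    cases L with
    | nil => simp [pathEdges]
    | cons e L => simpa [pathEdges] using ih

theorem pathWeight_append_cons (L : List α) (a : α) (N : List α) :
    pathWeight ℓ (L ++ a :: N) = pathWeight ℓ (L ++ [a]) + pathWeight ℓ (a :: N) := by
  simp [pathWeight, pathEdges_append_cons L a N]

theorem pathWeight_append_cons_append_cons (L M N : List α) (a b : α) :
    pathWeight ℓ (L ++ a :: (M ++ b :: N)) =
      pathWeight ℓ (L ++ [a]) + pathWeight ℓ (a :: (M ++ [b])) + pathWeight ℓ (b :: N) := by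
  rw [pathWeight_append_cons, ← List.cons_append, pathWeight_append_cons (a :: M),
    List.cons_append, add_assoc]

theorem IsPathFrom.nodup {p : List α} {x y : α} (h : IsPathFrom E p x y) : p.Nodup :=
  h.1.2.1

theorem IsPathFrom.isChain {p : List α} {x y : α} (h : IsPathFrom E p x y) : p.IsChain E :=
  h.1.2.2

def IsWalkFrom (E : α → α → Prop) (p : List α) (x y : α) : Prop :=
  p.IsChain E ∧ p.head? = some x ∧ p.getLast? = some y

theorem IsPathFrom.isWalkFrom {p : List α} {x y : α} (h : IsPathFrom E p x y) :
    IsWalkFrom E p x y :=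
  ⟨h.isChain, h.2⟩

theorem IsWalkFrom.isPathFrom {p : List α} {x y : α} (h : IsWalkFrom E p x y) (hp : p.Nodup) :
    IsPathFrom E p x y :=
  ⟨⟨by rintro rfl; simp [IsWalkFrom] at h, hp, h.1⟩, h.2⟩

theorem IsWalkFrom.replace_infix {L M M' N : List α} {a b x y : α}
    (h : IsWalkFrom E (L ++ a :: (M ++ b :: N)) x y) (hM' : (a :: (M' ++ [b])).IsChain E) :
    IsWalkFrom E (L ++ a :: (M' ++ b :: N)) x y := by
  obtain ⟨hchain, hx, hy⟩ := h
  obtain ⟨hL, -, hN⟩ := isChain_append_cons_append_cons_iff.1 hchain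
  refine ⟨isChain_append_cons_append_cons_iff.2 ⟨hL, hM', hN⟩, ?_, ?_⟩
  · simpa [List.head?_append] using hx
  · rwa [getLast?_append_cons_append_cons] at hy ⊢

theorem IsWalkFrom.exists_shorter_of_not_nodup (hG : NoNonposCycle E ℓ) {p : List α} {x y : α}
    (h : IsWalkFrom E p x y) (hp : ¬ p.Nodup) :
    ∃ q, IsWalkFrom E q x y ∧ q.length < p.length ∧ pathWeight ℓ q < pathWeight ℓ p := by
  obtain ⟨L, c, M, N, rfl, hM⟩ := exists_eq_append_cons_append_cons_of_not_nodup hp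
  obtain ⟨hchain, hx, hy⟩ := h
  obtain ⟨hL, hC, hN⟩ := isChain_append_cons_append_cons_iff.1 hchain
  have hcycle : IsCycle E (c :: (M ++ [c])) :=
    ⟨by simp, hC, by rw [← List.cons_append, List.getLast?_concat]; rfl,
      by simpa [List.nodup_append_comm (l₁ := M)] using hM⟩
  refine ⟨L ++ c :: N, ⟨List.isChain_split.2 ⟨hL, hN⟩, ?_, ?_⟩, by simp, ?_⟩
  · simpa [List.head?_append] using hx
  · rwa [getLast?_append_cons_append_cons, ← List.getLast?_append_cons L] at hy
  · rw [pathWeight_append_cons, pathWeight_append_cons_append_cons]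
    linarith [hG _ hcycle]

theorem IsWalkFrom.dist_le (hG : NoNonposCycle E ℓ) {p : List α} {x y : α}
    (h : IsWalkFrom E p x y) : dist E ℓ x y ≤ pathWeight ℓ p := by
  induction hn : p.length using Nat.strong_induction_on generalizing p with
  | _ n ih =>
    by_cases hp : p.Nodup
    · exact sInf_le ⟨p, h.isPathFrom hp, rfl⟩
    · obtain ⟨q, hq, hlen, hw⟩ := h.exists_shorter_of_not_nodup hG hp
      exact (ih _ (hn ▸ hlen) hq rfl).trans (EReal.coe_le_coe_iff.2 hw.le)

theorem IsWalkFrom.dist_lt_of_not_nodup (hG : NoNonposCycle E ℓ) {p : List α} {x y : α}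
    (h : IsWalkFrom E p x y) (hp : ¬ p.Nodup) : dist E ℓ x y < pathWeight ℓ p := by
  obtain ⟨q, hq, -, hw⟩ := h.exists_shorter_of_not_nodup hG hp
  exact (hq.dist_le hG).trans_lt (EReal.coe_lt_coe_iff.2 hw)

theorem IsShortestPath.pathWeight_le (hG : NoNonposCycle E ℓ) {p q : List α} {x y : α}
    (hp : IsShortestPath E ℓ p x y) (hq : IsWalkFrom E q x y) :
    pathWeight ℓ p ≤ pathWeight ℓ q :=
  EReal.coe_le_coe_iff.1 (hp.2 ▸ hq.dist_le hG)

theorem IsShortestPath.of_pathWeight_le (hG : NoNonposCycle E ℓ) {p q : List α} {x y : α}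
    (hp : IsShortestPath E ℓ p x y) (hq : IsWalkFrom E q x y)
    (hw : pathWeight ℓ q ≤ pathWeight ℓ p) : IsShortestPath E ℓ q x y := by
  have hnd : q.Nodup := by
    by_contra hnd
    exact (hq.dist_lt_of_not_nodup hG hnd).not_ge (hp.2 ▸ EReal.coe_le_coe_iff.2 hw)
  refine ⟨hq.isPathFrom hnd, ?_⟩
  rw [← hp.2, le_antisymm hw (hp.pathWeight_le hG hq)]

theorem isShortestPath_of_pathWeight_add_le (hG : NoNonposCycle E ℓ)
    {p₁ p₂ q₁ q₂ : List α} {x₁ y₁ x₂ y₂ : α}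
    (hp₁ : IsShortestPath E ℓ p₁ x₁ y₁) (hp₂ : IsShortestPath E ℓ p₂ x₂ y₂)
    (hq₁ : IsWalkFrom E q₁ x₁ y₁) (hq₂ : IsWalkFrom E q₂ x₂ y₂)
    (hw : pathWeight ℓ q₁ + pathWeight ℓ q₂ ≤ pathWeight ℓ p₁ + pathWeight ℓ p₂) :
    IsShortestPath E ℓ q₁ x₁ y₁ ∧ IsShortestPath E ℓ q₂ x₂ y₂ := by
  have h₁ := hp₁.pathWeight_le hG hq₁
  have h₂ := hp₂.pathWeight_le hG hq₂
  exact ⟨hp₁.of_pathWeight_le hG hq₁ (by linarith), hp₂.of_pathWeight_le hG hq₂ (by linarith)⟩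

end Walks

section Subpaths

variable {α : Type*} [DecidableEq α] {E : α → α → Prop}

theorem idxOf_eq_length_of_nodup {L T : List α} {a : α} (h : (L ++ a :: T).Nodup) :
    (L ++ a :: T).idxOf a = L.length := by
  have ha : a ∉ L := fun ha => (List.nodup_middle.1 h).notMem (List.mem_append_left T ha)
  simp [List.idxOf_append_of_notMem ha]

theorem idxOf_eq_zero_of_head?_eq_some {p : List α} {x : α} (h : p.head? = some x) :
    p.idxOf x = 0 := by
  cases p with
  | nil => simp at h
  | cons d t => simp_all

theorem idxOf_add_one_eq_length_of_getLast?_eq_some {p : List α} {y : α} (hp : p.Nodup)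
    (h : p.getLast? = some y) : p.idxOf y + 1 = p.length := by
  obtain ⟨L, rfl⟩ := List.getLast?_eq_some_iff.1 h
  simp [idxOf_eq_length_of_nodup hp]

theorem idxOf_eq_length_add_length_of_nodup {L M N : List α} {a b : α}
    (hp : (L ++ a :: (M ++ b :: N)).Nodup) :
    (L ++ a :: (M ++ b :: N)).idxOf b = L.length + M.length + 1 := by
  simpa [add_assoc] using
    idxOf_eq_length_of_nodup (L := L ++ a :: M) (T := N) (by simpa using hp)

theorem subpath_eq_of_eq_append {p A B C : List α} {x y : α} (hp : p = A ++ B ++ C)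
    (hx : p.idxOf x = A.length) (hy : p.idxOf y + 1 = A.length + B.length) :
    subpath p x y = B := by
  subst hp
  rw [subpath, hx, hy, List.take_left' List.length_append, List.drop_left' rfl]

theorem subpath_head_eq {L T : List α} {a x : α} (hp : (L ++ a :: T).Nodup)
    (hx : (L ++ a :: T).head? = some x) : subpath (L ++ a :: T) x a = L ++ [a] :=
  subpath_eq_of_eq_append (A := []) (C := T) (by simp) (idxOf_eq_zero_of_head?_eq_some hx)
    (by simp [idxOf_eq_length_of_nodup hp])

theorem subpath_infix_eq {L M N : List α} {a b : α} (hp : (L ++ a :: (M ++ b :: N)).Nodup) :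
    subpath (L ++ a :: (M ++ b :: N)) a b = a :: (M ++ [b]) :=
  subpath_eq_of_eq_append (C := N) (by simp) (idxOf_eq_length_of_nodup hp)
    (by simp [idxOf_eq_length_add_length_of_nodup hp]; omega)

theorem subpath_tail_eq {L N : List α} {b y : α} (hp : (L ++ b :: N).Nodup)
    (hy : (L ++ b :: N).getLast? = some y) : subpath (L ++ b :: N) b y = b :: N :=
  subpath_eq_of_eq_append (C := []) (by simp) (idxOf_eq_length_of_nodup hp)
    (by simpa using idxOf_add_one_eq_length_of_getLast?_eq_some hp hy)

theorem precedes_of_nodup {L M N : List α} {a b : α} (hp : (L ++ a :: (M ++ b :: N)).Nodup) :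
    Precedes (L ++ a :: (M ++ b :: N)) a b :=
  ⟨by simp, by simp, by
    rw [idxOf_eq_length_of_nodup hp, idxOf_eq_length_add_length_of_nodup hp]; omega⟩

theorem exists_eq_append_cons_append_cons_of_precedes {p : List α} {a b : α} (hp : p.Nodup)
    (hab : a ≠ b) (h : Precedes p a b) : ∃ L M N, p = L ++ a :: (M ++ b :: N) := by
  obtain ⟨ha, hb, hle⟩ := h
  obtain ⟨L, T, rfl⟩ := List.append_of_mem ha
  have hbT : b ∈ T := by
    rcases List.mem_append.1 hb with hbL | hbT
    · have := List.idxOf_lt_length_of_mem hbL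
      rw [idxOf_eq_length_of_nodup hp, List.idxOf_append_of_mem hbL] at hle
      omega
    · exact (List.mem_cons.1 hbT).resolve_left hab.symm
  obtain ⟨M, N, rfl⟩ := List.append_of_mem hbT
  exact ⟨L, M, N, rfl⟩

theorem swap_append_cons_append_cons {L₁ M₁ N₁ L₂ M₂ N₂ : List α} {a b x₁ y₁ x₂ y₂ : α}
    (h₁ : IsPathFrom E (L₁ ++ a :: (M₁ ++ b :: N₁)) x₁ y₁)
    (h₂ : IsPathFrom E (L₂ ++ a :: (M₂ ++ b :: N₂)) x₂ y₂) :
    swap (L₁ ++ a :: (M₁ ++ b :: N₁)) x₁ y₁ (L₂ ++ a :: (M₂ ++ b :: N₂)) x₂ y₂ a b =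
      (L₁ ++ a :: (M₂ ++ b :: N₁), L₂ ++ a :: (M₁ ++ b :: N₂)) := by
  obtain ⟨hx₁, hy₁⟩ := h₁.2
  obtain ⟨hx₂, hy₂⟩ := h₂.2
  have hp₁ := h₁.nodup
  have hp₂ := h₂.nodup
  have ht₁ := subpath_tail_eq (L := L₁ ++ a :: M₁) (N := N₁)
    (by simpa using hp₁) (by simpa using hy₁)
  have ht₂ := subpath_tail_eq (L := L₂ ++ a :: M₂) (N := N₂)
    (by simpa using hp₂) (by simpa using hy₂)
  simp only [List.append_assoc, List.cons_append] at ht₁ ht₂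
  simp [swap, pathConcat, subpath_head_eq hp₁ hx₁, subpath_head_eq hp₂ hx₂,
    subpath_infix_eq hp₁, subpath_infix_eq hp₂, ht₁, ht₂]

end Subpaths

/-- If `(P1, P2) ∈ Π(x1, y1) × Π(x2, y2)` has `(a, b)` as a
twin-crossing pair and `(Q1, Q2) = φ_{a,b}(P1, P2)`, then
`(Q1, Q2) ∈ Π(x1, y1) × Π(x2, y2)`, `(a, b)` is twin-crossing for `(Q1, Q2)`,
`φ_{a,b}(Q1, Q2) = (P1, P2)`, and `(Q1, Q2) ≠ (P1, P2)`. -/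
theorem swap_of_twin_crossing
    (hG : NoNonposCycle E ℓ) (x1 y1 x2 y2 a b : V) (P1 P2 : List V)
    (h1 : IsShortestPath E ℓ P1 x1 y1) (h2 : IsShortestPath E ℓ P2 x2 y2)
    (htc : TwinCrossingPair P1 P2 a b) :
    IsShortestPath E ℓ (swap P1 x1 y1 P2 x2 y2 a b).1 x1 y1 ∧
    IsShortestPath E ℓ (swap P1 x1 y1 P2 x2 y2 a b).2 x2 y2 ∧
    TwinCrossingPair (swap P1 x1 y1 P2 x2 y2 a b).1 (swap P1 x1 y1 P2 x2 y2 a b).2 a b ∧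
    swap (swap P1 x1 y1 P2 x2 y2 a b).1 x1 y1 (swap P1 x1 y1 P2 x2 y2 a b).2 x2 y2 a b
      = (P1, P2) ∧
    swap P1 x1 y1 P2 x2 y2 a b ≠ (P1, P2) := by
  obtain ⟨hab, hpre1, hpre2, hne⟩ := htc
  obtain ⟨L1, M1, N1, rfl⟩ := exists_eq_append_cons_append_cons_of_precedes h1.1.nodup hab hpre1
  obtain ⟨L2, M2, N2, rfl⟩ := exists_eq_append_cons_append_cons_of_precedes h2.1.nodup hab hpre2
  rw [subpath_infix_eq h1.1.nodup, subpath_infix_eq h2.1.nodup] at hne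
  have hM : M2 ≠ M1 := fun h => hne (by rw [h])
  obtain ⟨hQ1, hQ2⟩ := isShortestPath_of_pathWeight_add_le hG h1 h2
    (h1.1.isWalkFrom.replace_infix (isChain_append_cons_append_cons_iff.1 h2.1.isChain).2.1)
    (h2.1.isWalkFrom.replace_infix (isChain_append_cons_append_cons_iff.1 h1.1.isChain).2.1)
    (by simp only [pathWeight_append_cons_append_cons]; linarith)
  rw [swap_append_cons_append_cons h1.1 h2.1]
  refine ⟨hQ1, hQ2, ⟨hab, precedes_of_nodup hQ1.1.nodup, precedes_of_nodup hQ2.1.nodup, ?_⟩,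
    swap_append_cons_append_cons hQ1.1 hQ2.1, by simp [hM]⟩
  rw [subpath_infix_eq hQ1.1.nodup, subpath_infix_eq hQ2.1.nodup]
  simpa using hM

end DSP
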